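/- arXiv:2106.01976 — 5 statements merged into one kernel-verified Lean document; each statement's English description precedes it below -/
import Mathlib

section
/- For even d ≥ 2 and any x = (x_1,...,x_n) ∈ ℝ^n, the complete homogeneous symmetric polynomial h_d(x) ≥ 0, with equality if and only if x = 0. -/
open MeasureTheory Real Set Finset

/-! Auxiliary one-dimensional integral facts: `∫ |t|^k e^{-|t|} dt = 2·k!`. -/

lemma chs_aux_gIntOn (k : ℕ) : IntegrableOn (fun t : ℝ => t ^ k * exp (-t)) (Ioi 0) := by
  have h := integrableOn_rpow_mul_exp_neg_rpow (s := (k : ℝ)) (p := 1)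
    (by exact lt_of_lt_of_le (by norm_num) (Nat.cast_nonneg k)) zero_lt_one
  refine (integrableOn_congr_fun (fun t ht => ?_) measurableSet_Ioi).mp h
  rw [rpow_one, Real.rpow_natCast]

lemma chs_aux_gInt (k : ℕ) : Integrable (fun t : ℝ => |t| ^ k * exp (-|t|)) := by
  have h0 : IntegrableOn (fun t : ℝ => |t| ^ k * exp (-|t|)) (Ioi 0) := by
    refine (integrableOn_congr_fun (fun t ht => ?_) measurableSet_Ioi).mpr (chs_aux_gIntOn k)
    rw [abs_of_pos ht]
  have h1 : IntegrableOn (fun t : ℝ => |t| ^ k * exp (-|t|)) (Iic 0) := by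
    rw [← Measure.map_neg_eq_self (volume : Measure ℝ)]
    have m : MeasurableEmbedding fun x : ℝ => -x := (Homeomorph.neg ℝ).measurableEmbedding
    rw [m.integrableOn_map_iff]
    simp only [Function.comp_def, abs_neg, neg_preimage, neg_Iic, neg_zero]
    exact Iff.mpr integrableOn_Ici_iff_integrableOn_Ioi h0
  have := h1.union h0
  rw [Iic_union_Ioi] at this
  rwa [← integrableOn_univ]

lemma chs_aux_gVal (k : ℕ) : ∫ t : ℝ, |t| ^ k * exp (-|t|) = 2 * (Nat.factorial k : ℝ) := by
  rw [integral_comp_abs (f := fun t => t ^ k * exp (-t))]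
  have : ∫ x in Ioi (0:ℝ), x ^ k * exp (-x) = Real.Gamma (k + 1) := by
    rw [Real.Gamma_eq_integral (by positivity)]
    refine setIntegral_congr_fun measurableSet_Ioi (fun t ht => ?_)
    rw [add_sub_cancel_right, Real.rpow_natCast, mul_comm]
  rw [this, Real.Gamma_nat_eq_factorial]

/-- Complete homogeneous symmetric polynomial of degree `d` in `n` real variables:
the sum of all degree-`d` monomials in `x 0, ..., x (n-1)`. -/
noncomputable def chs (n d : ℕ) (x : Fin n → ℝ) : ℝ :=
  ∑ s : Sym (Fin n) d, ((s : Multiset (Fin n)).map x).prod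

/-- `chs` as a sum over exponent vectors. -/
lemma chs_eq_piAntidiag (n d : ℕ) (x : Fin n → ℝ) :
    chs n d x = ∑ k ∈ piAntidiag (univ : Finset (Fin n)) d, ∏ i, x i ^ k i := by
  rw [chs]
  refine Finset.sum_bij (i := fun (s : Sym (Fin n) d) _ =>
      fun i => Multiset.count i (s : Multiset (Fin n))) ?_ ?_ ?_ ?_
  · intro s _
    rw [mem_piAntidiag]
    refine ⟨?_, fun i _ => mem_univ i⟩
    rw [Multiset.sum_count_eq_card (fun a _ => Finset.mem_univ a)]
    exact s.2
  · intro s _ t _ h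
    exact Sym.ext (Multiset.ext.2 fun i => congrFun h i)
  · intro k hk
    rw [mem_piAntidiag] at hk
    refine ⟨⟨∑ i, Multiset.replicate (k i) i, ?_⟩, mem_univ _, ?_⟩
    · rw [show Multiset.card (∑ i, Multiset.replicate (k i) i) = ∑ i, k i by
        induction (Finset.univ : Finset (Fin n)) using Finset.cons_induction with
        | empty => simp
        | cons a s ha ih => simp [Finset.sum_cons, ih]]
      exact hk.1
    · funext i
      simp [Multiset.count_sum', Multiset.count_replicate]
  · intro s _
    rw [Finset.prod_multiset_map_count]
    refine Finset.prod_subset (Finset.subset_univ _) ?_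
    intro i _ hi
    rw [Multiset.mem_toFinset] at hi
    simp [Multiset.count_eq_zero_of_notMem hi]

/-- The integrand whose integral over `ℝⁿ` equals `2ⁿ · d! · chs n d x`. -/
noncomputable def chsG (n d : ℕ) (x : Fin n → ℝ) (t : Fin n → ℝ) : ℝ :=
  (∑ i, |t i| * x i) ^ d * ∏ i, exp (-|t i|)

lemma chsG_expand (n d : ℕ) (x : Fin n → ℝ) (t : Fin n → ℝ) : chsG n d x t =
    ∑ k ∈ piAntidiag (univ : Finset (Fin n)) d, (Nat.multinomial univ k : ℝ) *
      ∏ i, (x i ^ k i * (|t i| ^ k i * exp (-|t i|))) := by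
  rw [chsG, Finset.sum_pow_eq_sum_piAntidiag, Finset.sum_mul]
  refine Finset.sum_congr rfl (fun k _ => ?_)
  rw [mul_assoc, ← Finset.prod_mul_distrib]
  congr 1
  refine Finset.prod_congr rfl (fun i _ => ?_)
  rw [mul_pow]; ring

lemma chsG_int (n d : ℕ) (x : Fin n → ℝ) : Integrable (chsG n d x) := by
  have : chsG n d x = fun t => ∑ k ∈ piAntidiag (univ : Finset (Fin n)) d,
      (Nat.multinomial univ k : ℝ) *
      ∏ i, (x i ^ k i * (|t i| ^ k i * exp (-|t i|))) := funext (chsG_expand n d x)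
  rw [this]
  refine integrable_finset_sum _ (fun k _ => ?_)
  exact (Integrable.fintype_prod
    (f := fun i (u : ℝ) => x i ^ k i * (|u| ^ k i * exp (-|u|)))
    (fun i => (chs_aux_gInt (k i)).const_mul _)).const_mul _

lemma chsG_nonneg (n d : ℕ) (x : Fin n → ℝ) (hd : Even d) (t : Fin n → ℝ) :
    0 ≤ chsG n d x t :=
  mul_nonneg (hd.pow_nonneg _) (Finset.prod_nonneg fun _ _ => (exp_pos _).le)

lemma chsG_integral (n d : ℕ) (x : Fin n → ℝ) : ∫ t : Fin n → ℝ, chsG n d x t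
    = 2 ^ n * (Nat.factorial d : ℝ) * chs n d x := by
  simp_rw [chsG_expand n d x]
  rw [integral_finset_sum _ (fun k _ => ((Integrable.fintype_prod
    (f := fun i (u : ℝ) => x i ^ k i * (|u| ^ k i * exp (-|u|)))
    (fun i => (chs_aux_gInt (k i)).const_mul _)).const_mul _))]
  rw [chs_eq_piAntidiag, Finset.mul_sum]
  refine Finset.sum_congr rfl (fun k hk => ?_)
  rw [MeasureTheory.integral_const_mul, MeasureTheory.integral_fintype_prod_volume_eq_prod
    (f := fun i (u : ℝ) => x i ^ k i * (|u| ^ k i * exp (-|u|)))]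
  have : ∀ i : Fin n, ∫ u : ℝ, x i ^ k i * (|u| ^ k i * exp (-|u|))
      = x i ^ k i * (2 * (Nat.factorial (k i) : ℝ)) := fun i => by
    rw [MeasureTheory.integral_const_mul, chs_aux_gVal]
  simp_rw [this]
  rw [Finset.prod_mul_distrib, Finset.prod_mul_distrib, Finset.prod_const]
  rw [Finset.mem_piAntidiag] at hk
  have hmult : (Nat.multinomial univ k : ℝ) * ∏ i, (Nat.factorial (k i) : ℝ)
      = (Nat.factorial d : ℝ) := by
    rw [← Nat.cast_prod, ← Nat.cast_mul, mul_comm, Nat.multinomial_spec, hk.1]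
  rw [Finset.card_univ, Fintype.card_fin, ← hmult]
  ring

/-- A base point with coordinates `≥ 1` where `∑ t₀ i * x i ≠ 0`, provided `x ≠ 0`. -/
lemma chs_basept (n : ℕ) (x : Fin n → ℝ) (hx : x ≠ 0) :
    ∃ t₀ : Fin n → ℝ, (∀ i, 1 ≤ t₀ i) ∧ ∑ i, t₀ i * x i ≠ 0 := by
  obtain ⟨j, hj⟩ := Function.ne_iff.mp hx
  by_cases hS : ∑ i, x i = 0
  · refine ⟨fun i => if i = j then 2 else 1,
      fun i => by dsimp only; split <;> norm_num, ?_⟩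
    have : ∀ i, (if i = j then (2:ℝ) else 1) * x i = x i + (if i = j then x i else 0) := by
      intro i; split <;> ring
    simp_rw [this]
    rw [Finset.sum_add_distrib, hS, Finset.sum_ite_eq' univ j x]
    simpa using hj
  · exact ⟨fun _ => 1, fun _ => le_rfl, by simpa using hS⟩

theorem chs_nonneg_and_eq_zero_iff (n d : ℕ) (hd : Even d) (hd2 : 2 ≤ d) (x : Fin n → ℝ) :
    0 ≤ chs n d x ∧ (chs n d x = 0 ↔ x = 0) := by
  have hpos : (0:ℝ) < 2 ^ n * (Nat.factorial d : ℝ) := by positivity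
  have hint : 0 ≤ ∫ t : Fin n → ℝ, chsG n d x t :=
    integral_nonneg (chsG_nonneg n d x hd)
  constructor
  · rw [chsG_integral] at hint
    exact nonneg_of_mul_nonneg_right hint hpos
  constructor
  · -- chs = 0 → x = 0
    intro h0
    by_contra hx
    obtain ⟨t₀, ht1, hc⟩ := chs_basept n x hx
    set c := ∑ i, t₀ i * x i with hcdef
    set M := ∑ i, |x i| with hMdef
    have hM0 : 0 ≤ M := Finset.sum_nonneg fun i _ => abs_nonneg _
    set δ : ℝ := min (1/2) (|c| / (2 * (M + 1))) with hδdef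
    have hδpos : 0 < δ := by
      apply lt_min (by norm_num)
      have : 0 < |c| := abs_pos.mpr hc
      positivity
    have hδhalf : δ ≤ 1/2 := min_le_left _ _
    have hGz : volume {t : Fin n → ℝ | chsG n d x t ≠ 0} = 0 := by
      have : chsG n d x =ᵐ[volume] 0 := by
        rw [← integral_eq_zero_iff_of_nonneg (chsG_nonneg n d x hd) (chsG_int n d x)]
        rw [chsG_integral, h0, mul_zero]
      exact this
    set B : Set (Fin n → ℝ) := univ.pi (fun i => Ioo (t₀ i - δ) (t₀ i + δ)) with hBdef
    have hBsub : B ⊆ {t : Fin n → ℝ | chsG n d x t ≠ 0} := by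
      intro t ht
      simp only [hBdef, Set.mem_pi, Set.mem_univ, forall_true_left, Set.mem_Ioo,
        true_implies] at ht
      have htpos : ∀ i, 0 < t i := fun i => by
        have := (ht i).1
        have h1 := ht1 i
        nlinarith [hδhalf]
      have habs : ∀ i, |t i| = t i := fun i => abs_of_pos (htpos i)
      have hclose : |∑ i, |t i| * x i - c| < |c| := by
        rw [hcdef, ← Finset.sum_sub_distrib]
        calc |∑ i, (|t i| * x i - t₀ i * x i)| ≤ ∑ i, |(|t i| * x i - t₀ i * x i)| :=
              Finset.abs_sum_le_sum_abs _ _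
          _ ≤ ∑ i, δ * |x i| := by
              refine Finset.sum_le_sum fun i _ => ?_
              rw [habs i, ← sub_mul, abs_mul]
              refine mul_le_mul_of_nonneg_right ?_ (abs_nonneg _)
              rw [abs_le]
              have := (ht i).1; have := (ht i).2
              constructor <;> linarith
          _ = δ * M := by rw [← Finset.mul_sum]
          _ < |c| := by
              have h1 : δ ≤ |c| / (2 * (M + 1)) := min_le_right _ _
              have h2 : 0 < |c| := abs_pos.mpr hc
              have h3 : δ * M ≤ (|c| / (2 * (M + 1))) * M :=
                mul_le_mul_of_nonneg_right h1 hM0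
              have h4 : (|c| / (2 * (M + 1))) * M < |c| := by
                rw [div_mul_eq_mul_div, div_lt_iff₀ (by positivity)]
                nlinarith
              linarith
      have hsum : ∑ i, |t i| * x i ≠ 0 := by
        intro hz
        rw [hz] at hclose
        simp only [zero_sub, abs_neg] at hclose
        exact lt_irrefl _ hclose
      simp only [Set.mem_setOf_eq, chsG]
      exact mul_ne_zero (pow_ne_zero _ hsum)
        (ne_of_gt (Finset.prod_pos fun i _ => exp_pos _))
    have hBvol : volume B ≠ 0 := by
      rw [hBdef, volume_pi_pi]
      rw [Finset.prod_ne_zero_iff]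
      intro i _
      simp only [Real.volume_Ioo]
      simp only [ne_eq, ENNReal.ofReal_eq_zero, not_le]
      linarith
    exact hBvol (le_antisymm (hGz ▸ measure_mono hBsub) zero_le)
  · -- x = 0 → chs = 0
    intro h
    subst h
    rw [chs]
    refine Finset.sum_eq_zero fun s _ => ?_
    have h2 : Multiset.card (s : Multiset (Fin n)) = d := s.2
    have hpos' : 0 < Multiset.card (s : Multiset (Fin n)) := by omega
    obtain ⟨a, ha⟩ := Multiset.exists_mem_of_ne_zero (Multiset.card_pos.mp hpos')
    exact Multiset.prod_eq_zero (Multiset.mem_map.mpr ⟨a, ha, rfl⟩)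
end

section
/- If ξ_1,...,ξ_n are independent standard exponential random variables and x ∈ ℝ^n, then for every positive integer d, E[(ξ_1 x_1 + ⋯ + ξ_n x_n)^d] = d! · h_d(x_1,...,x_n). -/
open MeasureTheory ProbabilityTheory

section Aux
open Real Set

/-- exponential moment integrability and value -/
lemma expMoment (k : ℕ) :
    Integrable (fun t : ℝ => t ^ k) (expMeasure 1) ∧
      ∫ t, t ^ k ∂(expMeasure 1) = (k.factorial : ℝ) := by
  have hpdf : ∀ t : ℝ, gammaPDFReal 1 1 t = if 0 ≤ t then Real.exp (-t) else 0 := by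
    intro t
    simp [gammaPDFReal, Real.Gamma_one]
  have hmeasd : Measurable fun t : ℝ => (gammaPDFReal 1 1 t).toNNReal :=
    (measurable_gammaPDFReal 1 1).real_toNNReal
  have hrw : expMeasure 1 =
      MeasureTheory.volume.withDensity (fun t => ((gammaPDFReal 1 1 t).toNNReal : ENNReal)) := by
    rfl
  have hIoi : IntegrableOn (fun t : ℝ => Real.exp (-t) * t ^ k) (Ioi 0) := by
    have := Real.GammaIntegral_convergent (s := (k : ℝ) + 1) (by positivity)
    simpa [Real.rpow_natCast] using this
  have hIci : IntegrableOn (fun t : ℝ => Real.exp (-t) * t ^ k) (Ici 0) := by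
    rwa [integrableOn_Ici_iff_integrableOn_Ioi]
  have hind : (fun t : ℝ => (gammaPDFReal 1 1 t).toNNReal • t ^ k) =
      Set.indicator (Ici 0) (fun t => Real.exp (-t) * t ^ k) := by
    funext t
    simp only [hpdf, Set.indicator_apply, mem_Ici, NNReal.smul_def, smul_eq_mul]
    split_ifs with h
    · rw [Real.coe_toNNReal _ (Real.exp_nonneg _)]
    · simp
  constructor
  · rw [hrw, integrable_withDensity_iff_integrable_smul hmeasd]
    rw [hind]
    exact hIci.integrable_indicator measurableSet_Ici
  · rw [hrw, integral_withDensity_eq_integral_smul hmeasd, hind,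
      integral_indicator measurableSet_Ici, integral_Ici_eq_integral_Ioi]
    have h1 := Real.Gamma_eq_integral (s := (k : ℝ) + 1) (by positivity)
    rw [Real.Gamma_nat_eq_factorial] at h1
    simp only [add_sub_cancel_right, Real.rpow_natCast] at h1
    rw [← h1]

/-- integral of product of independent integrable functions -/
lemma indep_prod_integral {Ω : Type*} [MeasurableSpace Ω] {μ : Measure Ω}
    [IsProbabilityMeasure μ] {n : ℕ} {g : Fin n → Ω → ℝ}
    (hg : iIndepFun g μ) (hgm : ∀ i, Measurable (g i))
    (hgi : ∀ i, Integrable (g i) μ) (s : Finset (Fin n)) :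
    Integrable (fun ω => ∏ i ∈ s, g i ω) μ ∧
      ∫ ω, ∏ i ∈ s, g i ω ∂μ = ∏ i ∈ s, ∫ ω, g i ω ∂μ := by
  classical
  induction s using Finset.induction with
  | empty => simp
  | insert a s ha ih =>
    have hfun : IndepFun (∏ j ∈ s, g j) (g a) μ :=
      iIndepFun.indepFun_finset_prod_of_notMem hg hgm ha
    have hps : (∏ j ∈ s, g j) = fun ω => ∏ j ∈ s, g j ω := by
      funext ω; simp
    rw [hps] at hfun
    have hint : Integrable (fun ω => (∏ j ∈ s, g j ω) * g a ω) μ :=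
      hfun.integrable_mul ih.1 (hgi a)
    constructor
    · simp only [Finset.prod_insert ha]
      exact hint.congr (Filter.Eventually.of_forall fun ω => by ring)
    · simp only [Finset.prod_insert ha]
      have : ∫ ω, g a ω * ∏ j ∈ s, g j ω ∂μ = ∫ ω, (∏ j ∈ s, g j ω) * g a ω ∂μ := by
        congr 1; funext ω; ring
      have h2 : ∫ ω, (∏ j ∈ s, g j ω) * g a ω ∂μ =
          (∫ ω, ∏ j ∈ s, g j ω ∂μ) * ∫ ω, g a ω ∂μ :=
        hfun.integral_mul_eq_mul_integral ih.1.aestronglyMeasurable (hgi a).aestronglyMeasurable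
      rw [this, h2, ih.2]
      ring

lemma prod_map_count {α : Type*} [Fintype α] [DecidableEq α] {M : Type*} [CommMonoid M]
    (m : Multiset α) (f : α → M) : (m.map f).prod = ∏ i : α, f i ^ m.count i := by
  rw [Finset.prod_multiset_map_count]
  exact Finset.prod_subset (Finset.subset_univ _) (fun i _ hi => by
    simp [Multiset.count_eq_zero_of_notMem (by simpa using hi)])

lemma multinomial_mul_prod_factorial {α : Type*} [Fintype α] [DecidableEq α]
    (m : Multiset α) :
    m.countPerms * ∏ i : α, (m.count i).factorial = (Multiset.card m).factorial := by
  have hm : m.countPerms = Nat.multinomial m.toFinset m.count := by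
    rw [Multiset.countPerms, Finsupp.multinomial_eq, Multiset.toFinsupp_support]
    exact Nat.multinomial_congr fun i _ => Multiset.toFinsupp_apply m i
  have h1 : ∏ i : α, (m.count i).factorial = ∏ i ∈ m.toFinset, (m.count i).factorial :=
    (Finset.prod_subset (Finset.subset_univ _) (fun i _ hi => by
      simp [Multiset.count_eq_zero_of_notMem (by simpa using hi)])).symm
  rw [hm, h1, mul_comm, Nat.multinomial_spec, Multiset.toFinset_sum_count_eq]


end Aux

theorem expectation_pow_eq_chs (n : ℕ) {Ω : Type*} [MeasurableSpace Ω]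
    (μ : Measure Ω) [IsProbabilityMeasure μ]
    (ξ : Fin n → Ω → ℝ) (hmeas : ∀ i, Measurable (ξ i))
    (hindep : iIndepFun ξ μ)
    (hlaw : ∀ i, μ.map (ξ i) = expMeasure 1)
    (d : ℕ) (hd : 1 ≤ d) (x : Fin n → ℝ) :
    ∫ ω, (∑ i, ξ i ω * x i) ^ d ∂μ = (d.factorial : ℝ) * chs n d x := by
  classical
  have hξint : ∀ (i : Fin n) (k : ℕ), Integrable (fun ω => ξ i ω ^ k) μ := by
    intro i k
    have h := (expMoment k).1
    rw [← hlaw i] at h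
    exact (integrable_map_measure (measurable_id'.pow_const k).aestronglyMeasurable
      (hmeas i).aemeasurable).mp h
  have hξval : ∀ (i : Fin n) (k : ℕ), ∫ ω, ξ i ω ^ k ∂μ = (k.factorial : ℝ) := by
    intro i k
    have h := (expMoment k).2
    rw [← hlaw i, integral_map (hmeas i).aemeasurable
      (measurable_id'.pow_const k).aestronglyMeasurable] at h
    exact h
  have hexp : ∀ ω : Ω, (∑ i, ξ i ω * x i) ^ d =
      ∑ m : Sym (Fin n) d, ((m : Multiset (Fin n)).countPerms : ℝ) *
        ((∏ i, ξ i ω ^ (m : Multiset (Fin n)).count i) *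
          ∏ i, x i ^ (m : Multiset (Fin n)).count i) := by
    intro ω
    rw [show (∑ i, ξ i ω * x i) = Finset.univ.sum (fun i => ξ i ω * x i) from rfl,
      Finset.sum_pow, Finset.sym_univ]
    refine Finset.sum_congr rfl fun m _ => ?_
    rw [prod_map_count]
    congr 1
    rw [← Finset.prod_mul_distrib]
    exact Finset.prod_congr rfl fun i _ => (mul_pow _ _ _)
  -- per-term integrability and integral
  have hterm : ∀ m : Sym (Fin n) d,
      Integrable (fun ω => ∏ i, ξ i ω ^ (m : Multiset (Fin n)).count i) μ ∧
      ∫ ω, ∏ i, ξ i ω ^ (m : Multiset (Fin n)).count i ∂μ =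
        ∏ i, (((m : Multiset (Fin n)).count i).factorial : ℝ) := by
    intro m
    set c := fun i => (m : Multiset (Fin n)).count i with hc
    have hindep' : iIndepFun (fun i ω => ξ i ω ^ c i) μ :=
      hindep.comp (fun i t => t ^ c i) (fun i => measurable_id.pow_const (c i))
    have h := indep_prod_integral hindep' (fun i => (hmeas i).pow_const (c i))
      (fun i => hξint i (c i)) Finset.univ
    refine ⟨h.1, ?_⟩
    rw [h.2]
    exact Finset.prod_congr rfl fun i _ => hξval i (c i)
  calc ∫ ω, (∑ i, ξ i ω * x i) ^ d ∂μ
      = ∫ ω, ∑ m : Sym (Fin n) d, ((m : Multiset (Fin n)).countPerms : ℝ) *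
          ((∏ i, ξ i ω ^ (m : Multiset (Fin n)).count i) *
            ∏ i, x i ^ (m : Multiset (Fin n)).count i) ∂μ := by
        congr 1; funext ω; exact hexp ω
    _ = ∑ m : Sym (Fin n) d, ∫ ω, ((m : Multiset (Fin n)).countPerms : ℝ) *
          ((∏ i, ξ i ω ^ (m : Multiset (Fin n)).count i) *
            ∏ i, x i ^ (m : Multiset (Fin n)).count i) ∂μ := by
        refine integral_finset_sum _ fun m _ => ?_
        exact (((hterm m).1.mul_const _).const_mul _)
    _ = ∑ m : Sym (Fin n) d, ((m : Multiset (Fin n)).countPerms : ℝ) *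
          ((∏ i, (((m : Multiset (Fin n)).count i).factorial : ℝ)) *
            ∏ i, x i ^ (m : Multiset (Fin n)).count i) := by
        refine Finset.sum_congr rfl fun m _ => ?_
        rw [integral_const_mul, integral_mul_const, (hterm m).2]
    _ = (d.factorial : ℝ) * chs n d x := by
        rw [chs, Finset.mul_sum]
        refine Finset.sum_congr rfl fun m _ => ?_
        rw [prod_map_count, ← mul_assoc]
        congr 1
        have key := multinomial_mul_prod_factorial (m : Multiset (Fin n))
        rw [Sym.card_coe] at key
        push_cast [← key]
        ring
end

section
/- For even d ≥ 2 and any x, y ∈ ℝ^n, h_d(x+y)^{1/d} ≤ h_d(x)^{1/d} + h_d(y)^{1/d}. -/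
open MeasureTheory Real Set
open scoped NNReal ENNReal

noncomputable def expW : ℝ → ℝ≥0 := fun t => if 0 ≤ t then Real.toNNReal (Real.exp (-t)) else 0

lemma expW_meas : Measurable expW := by
  unfold expW
  exact Measurable.ite measurableSet_Ici ((Real.measurable_exp.comp measurable_neg).real_toNNReal)
    measurable_const

lemma expW_smul (k : ℕ) :
    (fun t : ℝ => expW t • t ^ k) = Set.indicator (Set.Ici 0) (fun t => Real.exp (-t) * t ^ k) := by
  funext t
  by_cases h : (0:ℝ) ≤ t
  · simp [expW, h, Set.indicator_of_mem (show t ∈ Set.Ici (0:ℝ) from h), NNReal.smul_def,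
      Real.coe_toNNReal _ (Real.exp_nonneg _)]
  · simp [expW, h, Set.indicator_of_notMem (show t ∉ Set.Ici (0:ℝ) from h)]

lemma gammaInt (k : ℕ) : IntegrableOn (fun t : ℝ => Real.exp (-t) * t ^ k) (Set.Ioi 0) := by
  have := Real.GammaIntegral_convergent (s := (k:ℝ) + 1) (by positivity)
  simpa [Real.rpow_natCast] using this

lemma integrable_expW_pow (k : ℕ) : Integrable (fun t : ℝ => expW t • t ^ k) := by
  rw [expW_smul]
  refine ((integrableOn_Ici_iff_integrableOn_Ioi).2 (gammaInt k)).integrable_indicator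
    measurableSet_Ici

lemma integral_expW_pow (k : ℕ) : ∫ t : ℝ, expW t • t ^ k = (k.factorial : ℝ) := by
  rw [expW_smul, integral_indicator measurableSet_Ici, integral_Ici_eq_integral_Ioi]
  have h := (Real.Gamma_eq_integral (s := (k:ℝ) + 1) (by positivity)).symm
  simp only [add_sub_cancel_right, Real.rpow_natCast] at h
  rw [h]
  exact_mod_cast Real.Gamma_nat_eq_factorial k

noncomputable def expMeas : Measure ℝ := volume.withDensity fun t => (expW t : ℝ≥0∞)

instance : IsProbabilityMeasure expMeas := by
  constructor
  rw [expMeas, withDensity_apply _ MeasurableSet.univ, Measure.restrict_univ]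
  have h0 : Integrable (fun t : ℝ => ((expW t : ℝ))) := by
    simpa [NNReal.smul_def] using integrable_expW_pow 0
  rw [lintegral_coe_eq_integral _ h0]
  have : ∫ t : ℝ, ((expW t : ℝ)) = 1 := by
    simpa [NNReal.smul_def] using integral_expW_pow 0
  rw [this]; simp

def ER : Type := ℝ

instance : MeasurableSpace ER := inferInstanceAs (MeasurableSpace ℝ)

noncomputable instance : MeasureSpace ER := ⟨expMeas⟩

instance : IsProbabilityMeasure (volume : Measure ER) :=
  inferInstanceAs (IsProbabilityMeasure expMeas)

instance : SigmaFinite (volume : Measure ER) :=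
  IsFiniteMeasure.toSigmaFinite (volume : Measure ER)

def ER.toR : ER → ℝ := fun t => t

lemma ER.toR_meas : Measurable ER.toR := measurable_id

lemma ER.integrable_pow (k : ℕ) : Integrable (fun t : ER => ER.toR t ^ k) := by
  show Integrable (fun t : ℝ => t ^ k) expMeas
  rw [expMeas, integrable_withDensity_iff_integrable_smul expW_meas]
  exact integrable_expW_pow k

lemma ER.integral_pow (k : ℕ) : ∫ t : ER, ER.toR t ^ k = (k.factorial : ℝ) := by
  show ∫ t : ℝ, t ^ k ∂expMeas = (k.factorial : ℝ)
  rw [expMeas, integral_withDensity_eq_integral_smul expW_meas]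
  exact integral_expW_pow k


lemma chs_eq (n d : ℕ) (x : Fin n → ℝ) :
    chs n d x = ∑ k ∈ Finset.piAntidiag Finset.univ d, ∏ i, x i ^ k i := by
  rw [chs, ← Finset.map_sym_eq_piAntidiag Finset.univ d, Finset.sum_map, Finset.sym_univ]
  refine Finset.sum_congr rfl fun s _ => ?_
  simp only [Function.Embedding.coeFn_mk, Sym.val_eq_coe]
  have h := Finset.prod_multiset_map_count s.1 x
  refine h.trans (Finset.prod_subset (Finset.subset_univ _) fun i _ hi => ?_)
  rw [Multiset.count_eq_zero_of_notMem (by simpa using hi), pow_zero]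

lemma mono_integrable (n : ℕ) (x : Fin n → ℝ) (k : Fin n → ℕ) :
    Integrable (fun t : Fin n → ER => ∏ i, (x i * ER.toR (t i)) ^ k i) := by
  refine Integrable.fintype_prod (f := fun i (u : ER) => (x i * ER.toR u) ^ k i) (μ := fun _ => (volume : Measure ER)) fun i => ?_
  simp_rw [mul_pow]
  exact (ER.integrable_pow (k i)).const_mul _

lemma key_integrable (n d : ℕ) (x : Fin n → ℝ) :
    Integrable (fun t : Fin n → ER => (∑ i, x i * ER.toR (t i)) ^ d) := by
  simp_rw [Finset.sum_pow_eq_sum_piAntidiag]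
  exact integrable_finset_sum _ fun k _ => ((mono_integrable n x k).const_mul _)

lemma key_integral (n d : ℕ) (x : Fin n → ℝ) :
    ∫ t : Fin n → ER, (∑ i, x i * ER.toR (t i)) ^ d = (d.factorial : ℝ) * chs n d x := by
  simp_rw [Finset.sum_pow_eq_sum_piAntidiag]
  rw [integral_finset_sum _ fun k _ => ((mono_integrable n x k).const_mul _)]
  have hmono : ∀ k : Fin n → ℕ, ∫ t : Fin n → ER, ∏ i, (x i * ER.toR (t i)) ^ k i
      = ∏ i, (x i ^ k i * ((k i).factorial : ℝ)) := by
    intro k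
    erw [@MeasureTheory.integral_fintype_prod_eq_prod ℝ (Fin n) _ _ (fun _ => ER)
      (fun i (u : ER) => (x i * ER.toR u) ^ k i) (fun _ => MeasureSpace.toMeasurableSpace)
      (fun _ => (volume : Measure ER)) (fun _ => IsFiniteMeasure.toSigmaFinite (volume : Measure ER))]
    refine Finset.prod_congr rfl fun i _ => ?_
    simp_rw [mul_pow]
    rw [integral_const_mul, ER.integral_pow]
  simp_rw [integral_const_mul, hmono]
  rw [chs_eq, Finset.mul_sum]
  refine Finset.sum_congr rfl fun k hk => ?_
  rw [Finset.prod_mul_distrib]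
  have hspec := Nat.multinomial_spec Finset.univ k
  have hsum : ∑ i, k i = d := (Finset.mem_piAntidiag.1 hk).1
  rw [hsum] at hspec
  have : ((∏ i, (k i).factorial : ℕ) : ℝ) * ((Nat.multinomial Finset.univ k : ℕ) : ℝ)
      = ((d.factorial : ℕ) : ℝ) := by exact_mod_cast congrArg (Nat.cast (R := ℝ)) hspec
  push_cast at this ⊢
  linear_combination (∏ i, x i ^ k i) * this

lemma chs_nonneg (n d : ℕ) (hd : Even d) (x : Fin n → ℝ) : 0 ≤ chs n d x := by
  have h := key_integral n d x
  have h2 : 0 ≤ ∫ t : Fin n → ER, (∑ i, x i * ER.toR (t i)) ^ d :=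
    integral_nonneg fun t => hd.pow_nonneg _
  rw [h] at h2
  have : (0:ℝ) < d.factorial := by positivity
  nlinarith

lemma sum_meas (n : ℕ) (x : Fin n → ℝ) :
    Measurable (fun t : Fin n → ER => ∑ i, x i * ER.toR (t i)) :=
  Finset.measurable_sum _ fun i _ =>
    measurable_const.mul (ER.toR_meas.comp (measurable_pi_apply i))

lemma key_lintegral (n d : ℕ) (hd : Even d) (x : Fin n → ℝ) :
    ∫⁻ t : Fin n → ER, (ENNReal.ofReal |∑ i, x i * ER.toR (t i)|) ^ (d:ℝ)
      = ENNReal.ofReal ((d.factorial : ℝ) * chs n d x) := by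
  have hpt : ∀ t : Fin n → ER, (ENNReal.ofReal |∑ i, x i * ER.toR (t i)|) ^ (d:ℝ)
      = ENNReal.ofReal ((∑ i, x i * ER.toR (t i)) ^ d) := by
    intro t
    rw [ENNReal.ofReal_rpow_of_nonneg (abs_nonneg _) (by positivity),
      Real.rpow_natCast, hd.pow_abs]
  simp_rw [hpt]
  rw [← MeasureTheory.ofReal_integral_eq_lintegral_ofReal (key_integrable n d x)
    (Filter.Eventually.of_forall fun t => hd.pow_nonneg _), key_integral]

theorem chs_rpow_triangle (n d : ℕ) (hd : Even d) (hd2 : 2 ≤ d) (x y : Fin n → ℝ) :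
    chs n d (x + y) ^ ((1 : ℝ) / d) ≤ chs n d x ^ ((1 : ℝ) / d) + chs n d y ^ ((1 : ℝ) / d) := by
  have hd0 : 0 < d := lt_of_lt_of_le two_pos hd2
  have hdpos : (0:ℝ) < d := by exact_mod_cast hd0
  have hd1 : (1:ℝ) ≤ (d:ℝ) := by exact_mod_cast hd0
  set c : ℝ := (d.factorial : ℝ) with hc
  have hcpos : 0 < c := by positivity
  set F : (Fin n → ER) → ℝ≥0∞ := fun t => ENNReal.ofReal |∑ i, x i * ER.toR (t i)| with hF
  set G : (Fin n → ER) → ℝ≥0∞ := fun t => ENNReal.ofReal |∑ i, y i * ER.toR (t i)| with hG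
  have hFm : Measurable F := ENNReal.measurable_ofReal.comp (sum_meas n x).abs
  have hGm : Measurable G := ENNReal.measurable_ofReal.comp (sum_meas n y).abs
  have hpt : ∀ t : Fin n → ER,
      ENNReal.ofReal |∑ i, (x + y) i * ER.toR (t i)| ≤ F t + G t := by
    intro t
    rw [hF, hG]
    dsimp only
    rw [← ENNReal.ofReal_add (abs_nonneg _) (abs_nonneg _)]
    refine ENNReal.ofReal_le_ofReal ?_
    have hsplit : ∑ i, (x + y) i * ER.toR (t i)
        = (∑ i, x i * ER.toR (t i)) + ∑ i, y i * ER.toR (t i) := by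
      rw [← Finset.sum_add_distrib]
      exact Finset.sum_congr rfl fun i _ => by simp [add_mul]
    rw [hsplit]
    exact abs_add_le _ _
  have h1 : ENNReal.ofReal (c * chs n d (x + y)) ^ ((1:ℝ)/d)
      ≤ ENNReal.ofReal (c * chs n d x) ^ ((1:ℝ)/d)
        + ENNReal.ofReal (c * chs n d y) ^ ((1:ℝ)/d) := by
    rw [← key_lintegral n d hd (x + y), ← key_lintegral n d hd x, ← key_lintegral n d hd y]
    calc (∫⁻ t : Fin n → ER, (ENNReal.ofReal |∑ i, (x + y) i * ER.toR (t i)|) ^ (d:ℝ)) ^ ((1:ℝ)/d)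
        ≤ (∫⁻ t : Fin n → ER, ((F + G) t) ^ (d:ℝ)) ^ ((1:ℝ)/d) := by
          refine ENNReal.rpow_le_rpow (lintegral_mono fun t => ?_) (by positivity)
          exact ENNReal.rpow_le_rpow (hpt t) (by positivity)
      _ ≤ (∫⁻ t : Fin n → ER, F t ^ (d:ℝ)) ^ ((1:ℝ)/d)
            + (∫⁻ t : Fin n → ER, G t ^ (d:ℝ)) ^ ((1:ℝ)/d) :=
          ENNReal.lintegral_Lp_add_le hFm.aemeasurable hGm.aemeasurable hd1
  have hA := chs_nonneg n d hd x
  have hB := chs_nonneg n d hd y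
  have hC := chs_nonneg n d hd (x + y)
  rw [ENNReal.ofReal_rpow_of_nonneg (by positivity) (by positivity),
    ENNReal.ofReal_rpow_of_nonneg (by positivity) (by positivity),
    ENNReal.ofReal_rpow_of_nonneg (by positivity) (by positivity),
    ← ENNReal.ofReal_add (by positivity) (by positivity)] at h1
  have h2 : (c * chs n d (x + y)) ^ ((1:ℝ)/d)
      ≤ (c * chs n d x) ^ ((1:ℝ)/d) + (c * chs n d y) ^ ((1:ℝ)/d) :=
    (ENNReal.ofReal_le_ofReal_iff (by positivity)).1 h1
  rw [Real.mul_rpow hcpos.le hC, Real.mul_rpow hcpos.le hA, Real.mul_rpow hcpos.le hB,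
    ← mul_add] at h2
  exact le_of_mul_le_mul_left h2 (Real.rpow_pos_of_pos hcpos _)
end

section
/- For any two n×n complex Hermitian matrices X and Y, tr(XY) ≤ Σ_{i=1}^n λ_i(X) λ_i(Y), where λ_1 ≥ ... ≥ λ_n denote eigenvalues in decreasing order. -/
/-- Decreasing rearrangement of a tuple of reals. -/
noncomputable def decSort {n : ℕ} (x : Fin n → ℝ) : Fin n → ℝ :=
  fun i => x (Tuple.sort x i.rev)

lemma decSort_antitone {n : ℕ} (x : Fin n → ℝ) : Antitone (decSort x) := by
  have h : Monotone (x ∘ Tuple.sort x) := Tuple.monotone_sort x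
  intro i j hij
  exact h (by simpa using Fin.rev_le_rev.mpr hij)

lemma rearrange {n : ℕ} (x y : Fin n → ℝ) (σ : Equiv.Perm (Fin n)) :
    ∑ i, x i * y (σ i) ≤ ∑ i, decSort x i * decSort y i := by
  set ex : Equiv.Perm (Fin n) := (Fin.revPerm.trans (Tuple.sort x))
  set ey : Equiv.Perm (Fin n) := (Fin.revPerm.trans (Tuple.sort y))
  set τ : Equiv.Perm (Fin n) := ex.trans (σ.trans ey.symm)
  have key : ∑ i, x i * y (σ i) = ∑ j, decSort x j * decSort y (τ j) := by
    rw [← Equiv.sum_comp ex (fun i => x i * y (σ i))]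
    refine Finset.sum_congr rfl fun j _ => ?_
    simp [decSort, τ, ex, ey, Equiv.symm_trans_apply, Fin.rev_rev]
  rw [key]
  exact ((decSort_antitone x).monovary (decSort_antitone y)).sum_mul_comp_perm_le_sum_mul

theorem vonNeumann_trace_ineq (n : ℕ) (X Y : Matrix (Fin n) (Fin n) ℂ)
    (hX : X.IsHermitian) (hY : Y.IsHermitian) :
    ((X * Y).trace).re ≤ ∑ i, decSort hX.eigenvalues i * decSort hY.eigenvalues i := by
  set a := hX.eigenvalues with ha
  set b := hY.eigenvalues with hb
  set U : Matrix (Fin n) (Fin n) ℂ := (hX.eigenvectorUnitary : Matrix (Fin n) (Fin n) ℂ) with hU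
  set V : Matrix (Fin n) (Fin n) ℂ := (hY.eigenvectorUnitary : Matrix (Fin n) (Fin n) ℂ) with hV
  set A : Matrix (Fin n) (Fin n) ℂ := Matrix.diagonal (Complex.ofReal ∘ a) with hA
  set B : Matrix (Fin n) (Fin n) ℂ := Matrix.diagonal (Complex.ofReal ∘ b) with hB
  set W : Matrix (Fin n) (Fin n) ℂ := star U * V with hW
  have hUU : star U * U = 1 := Matrix.mem_unitaryGroup_iff'.mp hX.eigenvectorUnitary.2
  have hUU' : U * star U = 1 := Matrix.mem_unitaryGroup_iff.mp hX.eigenvectorUnitary.2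
  have hVV : star V * V = 1 := Matrix.mem_unitaryGroup_iff'.mp hY.eigenvectorUnitary.2
  have hVV' : V * star V = 1 := Matrix.mem_unitaryGroup_iff.mp hY.eigenvectorUnitary.2
  have hsW : star W = star V * U := by rw [hW, star_mul, star_star]
  have hWW : W * star W = 1 := by
    rw [hW, hsW, Matrix.mul_assoc, ← Matrix.mul_assoc V, hVV', Matrix.one_mul, hUU]
  have hWW' : star W * W = 1 := by
    rw [hW, hsW, Matrix.mul_assoc, ← Matrix.mul_assoc U, hUU', Matrix.one_mul, hVV]
  set D : Matrix (Fin n) (Fin n) ℝ := fun i j => Complex.normSq (W i j) with hDdef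
  -- trace identity
  have htr0 : (X * Y).trace = (A * W * B * star W).trace := by
    rw [hX.spectral_theorem, hY.spectral_theorem]
    rw [Unitary.conjStarAlgAut_apply, Unitary.conjStarAlgAut_apply]
    rw [show (RCLike.ofReal : ℝ → ℂ) = Complex.ofReal from rfl]
    rw [← hU, ← hV, ← hA, ← hB]
    rw [show U * A * star U * (V * B * star V) = U * (A * W * B * (star V)) by
      simp only [hW, Matrix.mul_assoc]]
    rw [Matrix.trace_mul_comm]
    congr 1
    simp only [hsW, Matrix.mul_assoc]
  have entry : ∀ i, (A * W * B * star W) i i = ∑ j, ((a i * b j * D i j : ℝ) : ℂ) := by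
    intro i
    rw [show A * W * B * star W = A * ((W * B) * star W) by simp only [Matrix.mul_assoc]]
    rw [Matrix.diagonal_mul, Matrix.mul_apply]
    rw [Finset.mul_sum]
    refine Finset.sum_congr rfl fun j _ => ?_
    rw [Matrix.mul_diagonal, Matrix.star_apply]
    have : W i j * star (W i j) = (Complex.normSq (W i j) : ℂ) := Complex.mul_conj _
    simp only [Function.comp_apply, hDdef]
    push_cast
    linear_combination (a i : ℂ) * (b j : ℂ) * this
  have htr : ((X * Y).trace).re = ∑ i, ∑ j, a i * b j * D i j := by
    rw [htr0, Matrix.trace]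
    simp only [Matrix.diag_apply, entry, ← Complex.ofReal_sum]
    exact Complex.ofReal_re _
  -- D is doubly stochastic
  have hD : D ∈ doublyStochastic ℝ (Fin n) := by
    rw [mem_doublyStochastic_iff_sum]
    refine ⟨fun i j => Complex.normSq_nonneg _, fun i => ?_, fun j => ?_⟩
    · have h1 := congrArg (fun M => M i i) hWW
      simp only [Matrix.mul_apply, Matrix.star_apply, Matrix.one_apply_eq,
        Complex.star_def, Complex.mul_conj] at h1
      exact_mod_cast h1
    · have h1 := congrArg (fun M => M j j) hWW'
      simp only [Matrix.mul_apply, Matrix.star_apply, Matrix.one_apply_eq,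
        Complex.star_def, ← Complex.normSq_eq_conj_mul_self] at h1
      exact_mod_cast h1
  obtain ⟨w, hw0, hw1, hwsum⟩ := exists_eq_sum_perm_of_mem_doublyStochastic hD
  have hDexp : ∀ i j, D i j = ∑ σ : Equiv.Perm (Fin n), w σ * (σ.permMatrix ℝ) i j := by
    intro i j
    rw [← hwsum]
    simp only [Matrix.sum_apply, Matrix.smul_apply, smul_eq_mul]
  calc ((X * Y).trace).re = ∑ i, ∑ j, a i * b j * D i j := htr
    _ = ∑ σ : Equiv.Perm (Fin n), w σ * ∑ i, a i * b (σ i) := by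
        have key : ∀ σ : Equiv.Perm (Fin n),
            ∑ i, ∑ j, a i * b j * (w σ * (σ.permMatrix ℝ) i j)
              = w σ * ∑ i, a i * b (σ i) := by
          intro σ
          rw [Finset.mul_sum]
          refine Finset.sum_congr rfl fun i _ => ?_
          simp [Equiv.Perm.permMatrix, PEquiv.toMatrix_apply, Equiv.toPEquiv_apply,
            mul_ite, Finset.sum_ite_eq, mul_comm, mul_assoc, mul_left_comm]
        calc ∑ i, ∑ j, a i * b j * D i j
            = ∑ i, ∑ σ : Equiv.Perm (Fin n), ∑ j, a i * b j * (w σ * (σ.permMatrix ℝ) i j) := by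
              refine Finset.sum_congr rfl fun i _ => ?_
              rw [Finset.sum_comm]
              refine Finset.sum_congr rfl fun j _ => ?_
              rw [hDexp, Finset.mul_sum]
          _ = ∑ σ : Equiv.Perm (Fin n), ∑ i, ∑ j, a i * b j * (w σ * (σ.permMatrix ℝ) i j) :=
              Finset.sum_comm
          _ = ∑ σ : Equiv.Perm (Fin n), w σ * ∑ i, a i * b (σ i) :=
              Finset.sum_congr rfl fun σ _ => key σ
    _ ≤ ∑ σ : Equiv.Perm (Fin n), w σ * ∑ i, decSort a i * decSort b i := by
        refine Finset.sum_le_sum fun σ _ => mul_le_mul_of_nonneg_left ?_ (hw0 σ)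
        exact rearrange a b σ
    _ = ∑ i, decSort a i * decSort b i := by rw [← Finset.sum_mul, hw1, one_mul]
end

section
/- Let V be a complex vector space with a conjugate-linear involution v ↦ v*, let V_ℝ = {v : v = v*}, and let ‖·‖ be a norm on the real subspace V_ℝ. For even d ≥ 2, the function N_d(v) = ( (1/(2π C(d,d/2))) ∫_0^{2π} ‖e^{it}v + e^{-it}v*‖^d dt )^{1/d} is a norm on V (as a complex vector space) whose restriction to V_ℝ equals ‖·‖. -/
open MeasureTheory intervalIntegral
open scoped ENNReal NNReal

lemma aux_prod (n : ℕ) :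
    ∏ i ∈ Finset.range n, (2 * (i : ℝ) + 1) / (2 * (i : ℝ) + 2)
      = (Nat.centralBinom n : ℝ) / 4 ^ n := by
  induction n with
  | zero => simp [Nat.centralBinom]
  | succ k ih =>
    rw [Finset.prod_range_succ, ih]
    have h : ((k : ℝ) + 1) * (Nat.centralBinom (k + 1) : ℝ)
        = 2 * (2 * k + 1) * (Nat.centralBinom k : ℝ) := by
      exact_mod_cast congrArg (Nat.cast (R := ℝ)) (Nat.succ_mul_centralBinom_succ k)
    have hk : ((k : ℝ) + 1) ≠ 0 := by positivity
    have h4 : (4 : ℝ) ^ k ≠ 0 := by positivity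
    field_simp
    ring_nf
    ring_nf at h
    nlinarith [h, pow_pos (show (0:ℝ) < 4 by norm_num) k]

lemma aux_cos (n : ℕ) :
    ∫ t in (0:ℝ)..(2 * Real.pi), Real.cos t ^ (2 * n)
      = 2 * Real.pi * (Nat.centralBinom n : ℝ) / 4 ^ n := by
  have hc : ∀ a b : ℝ, IntervalIntegrable (fun t => Real.cos t ^ (2 * n)) volume a b :=
    fun a b => (Real.continuous_cos.pow _).intervalIntegrable a b
  have hper : Function.Periodic (fun t => Real.cos t ^ (2 * n)) Real.pi := by
    intro t
    simp only [Real.cos_add_pi]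
    exact (Even.neg_pow (even_two_mul n) _)
  have h1 : (∫ t in (0:ℝ)..(2 * Real.pi), Real.cos t ^ (2 * n))
      = (∫ t in (0:ℝ)..Real.pi, Real.cos t ^ (2 * n))
        + ∫ t in Real.pi..(2 * Real.pi), Real.cos t ^ (2 * n) :=
    (integral_add_adjacent_intervals (hc 0 Real.pi) (hc Real.pi (2 * Real.pi))).symm
  have h2 : (∫ t in Real.pi..(2 * Real.pi), Real.cos t ^ (2 * n))
      = ∫ t in (0:ℝ)..Real.pi, Real.cos t ^ (2 * n) := by
    have := hper.intervalIntegral_add_eq Real.pi 0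
    simpa [two_mul] using this
  have h3 : (∫ t in (0:ℝ)..Real.pi, Real.cos t ^ (2 * n))
      = 2 * ∫ t in (0:ℝ)..(Real.pi / 2), Real.cos t ^ (2 * n) := by
    have hsh : (∫ t in (0:ℝ)..Real.pi, Real.cos t ^ (2 * n))
        = ∫ t in (-(Real.pi / 2))..(Real.pi / 2), Real.cos t ^ (2 * n) := by
      have := hper.intervalIntegral_add_eq 0 (-(Real.pi / 2))
      rw [zero_add] at this
      rw [this]
      congr 1
      ring
    have hneg : (∫ t in (-(Real.pi / 2))..(0:ℝ), Real.cos t ^ (2 * n))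
        = ∫ t in (0:ℝ)..(Real.pi / 2), Real.cos t ^ (2 * n) := by
      have := intervalIntegral.integral_comp_neg (fun t => Real.cos t ^ (2 * n))
        (a := 0) (b := Real.pi / 2)
      simp only [Real.cos_neg, neg_zero] at this
      exact this.symm
    rw [hsh, ← intervalIntegral.integral_add_adjacent_intervals (hc _ 0) (hc 0 _), hneg]
    ring
  rw [h1, h2, h3, EulerSine.integral_cos_pow_eq, integral_sin_pow_even, aux_prod]
  ring

lemma aux_abs_cos_sub (t t' : ℝ) : |Real.cos t - Real.cos t'| ≤ |t - t'| := by
  rw [Real.cos_sub_cos]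
  have h1 : |Real.sin ((t + t') / 2)| ≤ 1 := Real.abs_sin_le_one _
  have h2 : |Real.sin ((t - t') / 2)| ≤ |(t - t') / 2| := Real.abs_sin_le_abs
  have h3 : |(t - t') / 2| = |t - t'| / 2 := by rw [abs_div]; norm_num
  rw [abs_mul, abs_mul]
  have : |(-2 : ℝ)| = 2 := by norm_num
  rw [this]
  nlinarith [abs_nonneg (Real.sin ((t - t') / 2)), abs_nonneg (t - t'),
    abs_nonneg (Real.sin ((t + t') / 2))]

lemma aux_abs_sin_sub (t t' : ℝ) : |Real.sin t - Real.sin t'| ≤ |t - t'| := by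
  rw [Real.sin_sub_sin]
  have h1 : |Real.cos ((t + t') / 2)| ≤ 1 := Real.abs_cos_le_one _
  have h2 : |Real.sin ((t - t') / 2)| ≤ |(t - t') / 2| := Real.abs_sin_le_abs
  have h3 : |(t - t') / 2| = |t - t'| / 2 := by rw [abs_div]; norm_num
  rw [abs_mul, abs_mul]
  have : |(2 : ℝ)| = 2 := by norm_num
  rw [this]
  nlinarith [abs_nonneg (Real.sin ((t - t') / 2)), abs_nonneg (t - t'),
    abs_nonneg (Real.cos ((t + t') / 2))]

theorem complexification_norm
    (V : Type*) [AddCommGroup V] [Module ℂ V]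
    (s : V → V)
    (hs_add : ∀ u v, s (u + v) = s u + s v)
    (hs_smul : ∀ (c : ℂ) (v), s (c • v) = (starRingEnd ℂ c) • s v)
    (hs_inv : ∀ v, s (s v) = v)
    (r : V → ℝ)
    (hr_nonneg : ∀ v, s v = v → 0 ≤ r v)
    (hr_def : ∀ v, s v = v → (r v = 0 ↔ v = 0))
    (hr_hom : ∀ (c : ℝ) (v), s v = v → r ((c : ℂ) • v) = |c| * r v)
    (hr_tri : ∀ u v, s u = u → s v = v → r (u + v) ≤ r u + r v)
    (d : ℕ) (hd : Even d) (hd2 : 2 ≤ d)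
    (N : V → ℝ)
    (hN : ∀ v, N v = ((1 / (2 * Real.pi * (d.choose (d / 2)))) *
      ∫ t in (0:ℝ)..(2 * Real.pi),
        r (Complex.exp (t * Complex.I) • v + Complex.exp (-(t * Complex.I)) • s v) ^ d)
          ^ ((1 : ℝ) / d)) :
    (∀ v, 0 ≤ N v) ∧
    (∀ v, N v = 0 ↔ v = 0) ∧
    (∀ (c : ℂ) (v), N (c • v) = ‖c‖ * N v) ∧
    (∀ u v, N (u + v) ≤ N u + N v) ∧
    (∀ v, s v = v → N v = r v) := by
  obtain ⟨m, hm⟩ := id hd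
  have hdm : d = 2 * m := by omega
  have hdR : (d : ℝ) ≠ 0 := by positivity
  have hpi : (0 : ℝ) < Real.pi := Real.pi_pos
  -- basic structure facts
  have hs_zero : s 0 = 0 := by
    have := hs_smul 0 0; simpa using this
  have hs_neg : ∀ v, s (-v) = -s v := by
    intro v; have := hs_smul (-1) v; simpa using this
  have hs_sub : ∀ u v, s (u - v) = s u - s v := by
    intro u v; rw [sub_eq_add_neg, hs_add, hs_neg, sub_eq_add_neg]
  have hr_zero : r 0 = 0 := by
    have := hr_hom 0 0 hs_zero; simpa using this
  have hr_neg : ∀ v, s v = v → r (-v) = r v := by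
    intro v hv
    have := hr_hom (-1) v hv; simpa using this
  have hfixRe : ∀ (α : ℝ) (u : V), s u = u → s ((α : ℂ) • u) = (α : ℂ) • u := by
    intro α u hu; rw [hs_smul, hu, Complex.conj_ofReal]
  have hfix2 : ∀ (α β : ℝ) (u w : V), s u = u → s w = w →
      s ((α : ℂ) • u + (β : ℂ) • w) = (α : ℂ) • u + (β : ℂ) • w := by
    intro α β u w hu hw
    rw [hs_add, hfixRe _ _ hu, hfixRe _ _ hw]
  have hfixa : ∀ v, s (v + s v) = v + s v := by
    intro v; rw [hs_add, hs_inv, add_comm]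
  have hfixb : ∀ v, s (Complex.I • (v - s v)) = Complex.I • (v - s v) := by
    intro v
    rw [hs_smul, hs_sub, hs_inv, Complex.conj_I, neg_smul, smul_sub, smul_sub, neg_sub]
  -- subadditivity helpers
  have hr_two : ∀ (α β : ℝ) (u w : V), s u = u → s w = w →
      r ((α : ℂ) • u + (β : ℂ) • w) ≤ |α| * r u + |β| * r w := by
    intro α β u w hu hw
    calc r ((α : ℂ) • u + (β : ℂ) • w)
        ≤ r ((α : ℂ) • u) + r ((β : ℂ) • w) :=
          hr_tri _ _ (hfixRe _ _ hu) (hfixRe _ _ hw)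
      _ = |α| * r u + |β| * r w := by rw [hr_hom _ _ hu, hr_hom _ _ hw]
  have hr_rev : ∀ u w, s u = u → s w = w → |r u - r w| ≤ r (u - w) := by
    intro u w hu hw
    have hfuw : s (u - w) = u - w := by rw [hs_sub, hu, hw]
    have h1 : r u ≤ r (u - w) + r w := by
      have := hr_tri (u - w) w hfuw hw
      simpa [sub_add_cancel] using this
    have hneg : r (w - u) = r (u - w) := by
      rw [show w - u = -(u - w) by abel, hr_neg _ hfuw]
    have h2 : r w ≤ r (u - w) + r u := by
      have := hr_tri (w - u) u (by rw [hs_sub, hu, hw]) hu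
      rw [hneg] at this
      simpa [sub_add_cancel] using this
    rw [abs_sub_le_iff]
    constructor <;> linarith
  -- the integrand
  set F : V → ℝ → ℝ := fun v t =>
    r (Complex.exp (t * Complex.I) • v + Complex.exp (-(t * Complex.I)) • s v) with hFdef
  have hexp : ∀ t : ℝ, Complex.exp ((t : ℂ) * Complex.I)
      = (Real.cos t : ℂ) + (Real.sin t : ℂ) * Complex.I := by
    intro t
    rw [Complex.exp_mul_I, ← Complex.ofReal_cos, ← Complex.ofReal_sin]
  have hexpneg : ∀ t : ℝ, Complex.exp (-((t : ℂ) * Complex.I))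
      = (Real.cos t : ℂ) - (Real.sin t : ℂ) * Complex.I := by
    intro t
    rw [show -((t : ℂ) * Complex.I) = ((-t : ℝ) : ℂ) * Complex.I by push_cast; ring,
      hexp (-t)]
    push_cast [Real.cos_neg, Real.sin_neg]
    ring
  have hW : ∀ (v : V) (t : ℝ),
      Complex.exp ((t : ℂ) * Complex.I) • v + Complex.exp (-((t : ℂ) * Complex.I)) • s v
        = (Real.cos t : ℂ) • (v + s v) + (Real.sin t : ℂ) • (Complex.I • (v - s v)) := by
    intro v t
    rw [hexp, hexpneg]
    module
  have hWfix : ∀ (v : V) (t : ℝ),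
      s (Complex.exp ((t : ℂ) * Complex.I) • v + Complex.exp (-((t : ℂ) * Complex.I)) • s v)
        = Complex.exp ((t : ℂ) * Complex.I) • v + Complex.exp (-((t : ℂ) * Complex.I)) • s v := by
    intro v t
    rw [hW]
    exact hfix2 _ _ _ _ (hfixa v) (hfixb v)
  have hFab : ∀ (v : V) (t : ℝ),
      F v t = r ((Real.cos t : ℂ) • (v + s v) + (Real.sin t : ℂ) • (Complex.I • (v - s v))) := by
    intro v t
    rw [hFdef]
    simp only []
    rw [hW]
  have hFnonneg : ∀ (v : V) (t : ℝ), 0 ≤ F v t := by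
    intro v t
    exact hr_nonneg _ (hWfix v t)
  -- continuity
  have hFcont : ∀ v, Continuous (F v) := by
    intro v
    have ha := hfixa v
    have hb := hfixb v
    have hra := hr_nonneg _ ha
    have hrb := hr_nonneg _ hb
    refine (LipschitzWith.of_dist_le_mul
      (K := (r (v + s v) + r (Complex.I • (v - s v))).toNNReal) ?_).continuous
    intro t t'
    rw [Real.dist_eq, Real.dist_eq, Real.coe_toNNReal _ (by positivity)]
    have key : |F v t - F v t'|
        ≤ |Real.cos t - Real.cos t'| * r (v + s v)
          + |Real.sin t - Real.sin t'| * r (Complex.I • (v - s v)) := by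
      rw [hFab, hFab]
      refine le_trans (hr_rev _ _ (hfix2 _ _ _ _ ha hb) (hfix2 _ _ _ _ ha hb)) ?_
      have heq : ((Real.cos t : ℂ) • (v + s v) + (Real.sin t : ℂ) • (Complex.I • (v - s v)))
          - ((Real.cos t' : ℂ) • (v + s v) + (Real.sin t' : ℂ) • (Complex.I • (v - s v)))
          = ((Real.cos t - Real.cos t' : ℝ) : ℂ) • (v + s v)
            + ((Real.sin t - Real.sin t' : ℝ) : ℂ) • (Complex.I • (v - s v)) := by
        push_cast
        module
      rw [heq]
      exact hr_two _ _ _ _ ha hb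
    have hc1 := aux_abs_cos_sub t t'
    have hc2 := aux_abs_sin_sub t t'
    nlinarith [key, abs_nonneg (t - t')]
  have hIntF : ∀ (v : V) (a b : ℝ), IntervalIntegrable (fun t => F v t ^ d) volume a b := by
    intro v a b
    exact ((hFcont v).pow d).intervalIntegrable a b
  -- the constant and reformulation of N
  set c0 : ℝ := 1 / (2 * Real.pi * (d.choose (d / 2))) with hc0def
  have hCB : (d.choose (d / 2)) = Nat.centralBinom m := by
    rw [hdm, Nat.centralBinom]
    congr 1
    omega
  have hCBpos : (0 : ℝ) < (d.choose (d / 2) : ℝ) := by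
    exact_mod_cast Nat.choose_pos (Nat.div_le_self d 2)
  have hc0pos : 0 < c0 := by
    rw [hc0def]
    positivity
  have hNv : ∀ v, N v = (c0 * ∫ t in (0:ℝ)..(2 * Real.pi), F v t ^ d) ^ ((1 : ℝ) / d) := by
    intro v
    rw [hN v, hc0def, hFdef]
  have hIvnn : ∀ v, 0 ≤ ∫ t in (0:ℝ)..(2 * Real.pi), F v t ^ d := by
    intro v
    refine intervalIntegral.integral_nonneg (by positivity) ?_
    intro t _
    exact pow_nonneg (hFnonneg v t) d
  have hNnn : ∀ v, 0 ≤ N v := by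
    intro v
    rw [hNv v]
    have := mul_nonneg hc0pos.le (hIvnn v)
    positivity
  -- rpow extraction helper
  have hrpow_pow : ∀ x : ℝ, 0 ≤ x → ((x ^ d : ℝ)) ^ ((1 : ℝ) / d) = x := by
    intro x hx
    rw [← Real.rpow_natCast x d, ← Real.rpow_mul hx]
    rw [mul_one_div, div_self hdR, Real.rpow_one]
  -- Part 5 : restriction to the real points
  have part5 : ∀ v, s v = v → N v = r v := by
    intro v hv
    have hrv : 0 ≤ r v := hr_nonneg v hv
    have hW2 : ∀ t : ℝ, F v t = |2 * Real.cos t| * r v := by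
      intro t
      rw [hFab, hv, sub_self, smul_zero, smul_zero, add_zero]
      have h1 : (Real.cos t : ℂ) • (v + v) = ((2 * Real.cos t : ℝ) : ℂ) • v := by
        rw [← two_smul ℂ v, smul_smul]
        push_cast
        ring_nf
      rw [h1, hr_hom _ _ hv]
    have hIv5 : (∫ t in (0:ℝ)..(2 * Real.pi), F v t ^ d)
        = 2 ^ d * r v ^ d * (2 * Real.pi * (Nat.centralBinom m : ℝ) / 4 ^ m) := by
      have : ∀ t : ℝ, F v t ^ d = (2 ^ d * r v ^ d) * Real.cos t ^ (2 * m) := by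
        intro t
        rw [hW2, mul_pow, hd.pow_abs, mul_pow, ← hdm]
        ring
      rw [intervalIntegral.integral_congr (g := fun t => (2 ^ d * r v ^ d) * Real.cos t ^ (2 * m))
        (fun t _ => this t)]
      rw [intervalIntegral.integral_const_mul, aux_cos]
    rw [hNv v, hIv5, hc0def, hCB]
    have h4m : (2 : ℝ) ^ d = 4 ^ m := by
      rw [hdm, pow_mul]
      norm_num
    have hCBm : (0 : ℝ) < (Nat.centralBinom m : ℝ) := by
      exact_mod_cast Nat.centralBinom_pos m
    have hcollapse : 1 / (2 * Real.pi * (Nat.centralBinom m : ℝ))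
        * (2 ^ d * r v ^ d * (2 * Real.pi * (Nat.centralBinom m : ℝ) / 4 ^ m)) = r v ^ d := by
      rw [h4m]
      field_simp
    rw [hcollapse, hrpow_pow _ hrv]
  -- Part 2
  have part2 : ∀ v, N v = 0 ↔ v = 0 := by
    intro v
    constructor
    · intro hNv0
      rw [hNv v] at hNv0
      have h0 : c0 * ∫ t in (0:ℝ)..(2 * Real.pi), F v t ^ d = 0 := by
        have hnn := mul_nonneg hc0pos.le (hIvnn v)
        exact (Real.rpow_eq_zero hnn (by positivity)).mp hNv0
      have hI0 : (∫ t in (0:ℝ)..(2 * Real.pi), F v t ^ d) = 0 := by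
        rcases mul_eq_zero.mp h0 with h | h
        · exact absurd h hc0pos.ne'
        · exact h
      by_contra hv0
      -- find a point where F v is positive
      have hpos : ∃ t0 ∈ Set.Icc (0:ℝ) (2 * Real.pi), 0 < F v t0 ^ d := by
        by_cases hA : v + s v = 0
        · -- then s v = -v and I • (v - s v) = (2 I) • v ≠ 0
          refine ⟨Real.pi / 2, ⟨by positivity, by nlinarith⟩, ?_⟩
          have hbne : Complex.I • (v - s v) ≠ 0 := by
            have hsv : s v = -v := eq_neg_of_add_eq_zero_left (by rw [add_comm]; exact hA)
            rw [hsv, sub_neg_eq_add, ← two_smul ℂ v, smul_smul]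
            rw [smul_ne_zero_iff]
            refine ⟨by simp [Complex.ext_iff], hv0⟩
          have hFpi2 : F v (Real.pi / 2) = r (Complex.I • (v - s v)) := by
            rw [hFab, Real.cos_pi_div_two, Real.sin_pi_div_two]
            push_cast
            rw [zero_smul, one_smul, zero_add]
          have : r (Complex.I • (v - s v)) ≠ 0 :=
            fun h => hbne ((hr_def _ (hfixb v)).mp h)
          have hFpos : 0 < F v (Real.pi / 2) :=
            lt_of_le_of_ne (hFnonneg v _) (by rw [hFpi2]; exact Ne.symm this)
          exact pow_pos hFpos d
        · refine ⟨0, ⟨le_refl _, by positivity⟩, ?_⟩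
          have hF0 : F v 0 = r (v + s v) := by
            rw [hFab]
            norm_num
          have : r (v + s v) ≠ 0 := fun h => hA ((hr_def _ (hfixa v)).mp h)
          have hFpos : 0 < F v 0 := lt_of_le_of_ne (hFnonneg v 0) (by rw [hF0]; exact (Ne.symm this))
          exact pow_pos hFpos d
      obtain ⟨t0, ht0, hFt0⟩ := hpos
      have : 0 < ∫ t in (0:ℝ)..(2 * Real.pi), F v t ^ d := by
        refine intervalIntegral.integral_pos (by positivity) ?_ ?_ ⟨t0, ht0, hFt0⟩
        · exact ((hFcont v).pow d).continuousOn
        · intro t _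
          exact pow_nonneg (hFnonneg v t) d
      exact absurd hI0 this.ne'
    · intro hv0
      subst hv0
      rw [part5 0 hs_zero, hr_zero]
  -- periodicity
  have hper : ∀ v, Function.Periodic (fun t => F v t ^ d) (2 * Real.pi) := by
    intro v t
    simp only []
    have : F v (t + 2 * Real.pi) = F v t := by
      rw [hFab, hFab, Real.cos_add_two_pi, Real.sin_add_two_pi]
    rw [this]
  -- Part 3 : homogeneity
  have part3 : ∀ (c : ℂ) (v : V), N (c • v) = ‖c‖ * N v := by
    intro c v
    set ρ : ℝ := ‖c‖ with hρdef
    set θ : ℝ := Complex.arg c with hθdef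
    have hc : (ρ : ℂ) * Complex.exp (θ * Complex.I) = c := Complex.norm_mul_exp_arg_mul_I c
    have hρ : 0 ≤ ρ := norm_nonneg c
    have hconj : (starRingEnd ℂ) c = (ρ : ℂ) * Complex.exp (-(θ * Complex.I)) := by
      rw [← hc, map_mul, Complex.conj_ofReal, ← Complex.exp_conj, map_mul,
        Complex.conj_ofReal, Complex.conj_I, mul_neg]
    have hFc : ∀ t : ℝ, F (c • v) t = ρ * F v (t + θ) := by
      intro t
      have h1 : Complex.exp ((t : ℂ) * Complex.I) * c
          = (ρ : ℂ) * Complex.exp (((t + θ : ℝ) : ℂ) * Complex.I) := by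
        rw [← hc, ← mul_assoc, mul_comm (Complex.exp _) (ρ:ℂ), mul_assoc, ← Complex.exp_add]
        push_cast
        ring_nf
      have h2 : Complex.exp (-((t : ℂ) * Complex.I)) * (starRingEnd ℂ) c
          = (ρ : ℂ) * Complex.exp (-(((t + θ : ℝ) : ℂ) * Complex.I)) := by
        rw [hconj, ← mul_assoc, mul_comm (Complex.exp _) (ρ:ℂ), mul_assoc, ← Complex.exp_add]
        push_cast
        ring_nf
      have hstep : F (c • v) t
          = r ((Complex.exp ((t : ℂ) * Complex.I) * c) • v
              + (Complex.exp (-((t : ℂ) * Complex.I)) * (starRingEnd ℂ) c) • s v) := by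
        rw [hFdef]
        simp only []
        rw [hs_smul, smul_smul, smul_smul]
      rw [hstep, h1, h2, ← smul_smul, ← smul_smul, ← smul_add, hr_hom ρ _ (hWfix v (t + θ)),
        abs_of_nonneg hρ]
    have hIc : (∫ t in (0:ℝ)..(2 * Real.pi), F (c • v) t ^ d)
        = ρ ^ d * ∫ t in (0:ℝ)..(2 * Real.pi), F v t ^ d := by
      rw [intervalIntegral.integral_congr
        (g := fun t => ρ ^ d * F v (t + θ) ^ d) (fun t _ => by rw [hFc t]; ring)]
      rw [intervalIntegral.integral_const_mul]
      congr 1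
      rw [intervalIntegral.integral_comp_add_right (fun u => F v u ^ d) θ]
      have hp := (hper v).intervalIntegral_add_eq θ 0
      rw [zero_add] at hp
      rw [show (0:ℝ) + θ = θ by ring, show 2 * Real.pi + θ = θ + 2 * Real.pi by ring]
      exact hp
    rw [hNv, hNv, hIc, show c0 * (ρ ^ d * (∫ t in (0:ℝ)..(2 * Real.pi), F v t ^ d))
        = ρ ^ d * (c0 * ∫ t in (0:ℝ)..(2 * Real.pi), F v t ^ d) by ring]
    rw [Real.mul_rpow (pow_nonneg hρ d) (mul_nonneg hc0pos.le (hIvnn v)), hrpow_pow ρ hρ]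
  -- Part 4 : triangle inequality
  have part4 : ∀ u v, N (u + v) ≤ N u + N v := by
    intro u v
    set μ : Measure ℝ := volume.restrict (Set.Ioc (0:ℝ) (2 * Real.pi)) with hμdef
    haveI : IsFiniteMeasure μ := by
      constructor
      rw [hμdef, Measure.restrict_apply MeasurableSet.univ, Set.univ_inter, Real.volume_Ioc]
      exact ENNReal.ofReal_lt_top
    have hmeas : ∀ w, AEStronglyMeasurable (F w) μ := fun w => (hFcont w).aestronglyMeasurable
    have hdne : ((d : ℝ≥0∞)) ≠ 0 := by
      exact_mod_cast (show d ≠ 0 by omega)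
    have hmem : ∀ w, MemLp (F w) ((d : ℝ≥0∞)) μ := by
      intro w
      obtain ⟨M, hM⟩ := (isCompact_Icc (a := (0:ℝ)) (b := 2 * Real.pi)).exists_bound_of_continuousOn
        (hFcont w).continuousOn
      refine MemLp.of_bound (hmeas w) M ?_
      rw [hμdef]
      exact (ae_restrict_iff' measurableSet_Ioc).mpr
        (ae_of_all _ fun t ht => hM t (Set.Ioc_subset_Icc_self ht))
    have hint_eq : ∀ w, (∫ t in (0:ℝ)..(2 * Real.pi), F w t ^ d) = ∫ t, F w t ^ d ∂μ := by
      intro w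
      rw [intervalIntegral.integral_of_le (by positivity), hμdef]
    have hμnn : ∀ w, 0 ≤ ∫ t, F w t ^ d ∂μ := by
      intro w
      rw [← hint_eq]
      exact hIvnn w
    have hA_nn : ∀ w, 0 ≤ (∫ t, F w t ^ d ∂μ) ^ ((1:ℝ) / d) :=
      fun w => Real.rpow_nonneg (hμnn w) _
    have heLp : ∀ w, eLpNorm (F w) ((d : ℝ≥0∞)) μ
        = ENNReal.ofReal ((∫ t, F w t ^ d ∂μ) ^ ((1:ℝ) / d)) := by
      intro w
      rw [(hmem w).eLpNorm_eq_integral_rpow_norm hdne (ENNReal.natCast_ne_top d)]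
      congr 1
      have htor : ((d : ℝ≥0∞)).toReal = (d : ℝ) := by simp
      rw [htor]
      have h1 : (∫ a, ‖F w a‖ ^ (d : ℝ) ∂μ) = ∫ t, F w t ^ d ∂μ := by
        refine integral_congr_ae (ae_of_all _ fun t => ?_)
        show ‖F w t‖ ^ (d : ℝ) = F w t ^ d
        rw [Real.norm_eq_abs, abs_of_nonneg (hFnonneg w t), Real.rpow_natCast]
      rw [h1, one_div]
    have hmono : eLpNorm (F (u + v)) ((d : ℝ≥0∞)) μ
        ≤ eLpNorm (fun t => F u t + F v t) ((d : ℝ≥0∞)) μ := by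
      refine eLpNorm_mono_real fun t => ?_
      rw [Real.norm_eq_abs, abs_of_nonneg (hFnonneg _ t)]
      have hsplit : Complex.exp ((t : ℂ) * Complex.I) • (u + v)
            + Complex.exp (-((t : ℂ) * Complex.I)) • s (u + v)
          = (Complex.exp ((t : ℂ) * Complex.I) • u
              + Complex.exp (-((t : ℂ) * Complex.I)) • s u)
            + (Complex.exp ((t : ℂ) * Complex.I) • v
              + Complex.exp (-((t : ℂ) * Complex.I)) • s v) := by
        rw [hs_add, smul_add, smul_add]
        abel
      have : F (u + v) t = r ((Complex.exp ((t : ℂ) * Complex.I) • u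
              + Complex.exp (-((t : ℂ) * Complex.I)) • s u)
            + (Complex.exp ((t : ℂ) * Complex.I) • v
              + Complex.exp (-((t : ℂ) * Complex.I)) • s v)) := by
        rw [hFdef]
        simp only []
        rw [hsplit]
      rw [this]
      exact hr_tri _ _ (hWfix u t) (hWfix v t)
    have hadd : eLpNorm (fun t => F u t + F v t) ((d : ℝ≥0∞)) μ
        ≤ eLpNorm (F u) ((d : ℝ≥0∞)) μ + eLpNorm (F v) ((d : ℝ≥0∞)) μ := by
      have h1d : (1 : ℝ≥0∞) ≤ (d : ℝ≥0∞) := by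
        exact_mod_cast (show 1 ≤ d by omega)
      exact eLpNorm_add_le (hmeas u) (hmeas v) h1d
    have hfin := hmono.trans hadd
    rw [heLp, heLp, heLp, ← ENNReal.ofReal_add (hA_nn u) (hA_nn v)] at hfin
    have hABle := (ENNReal.ofReal_le_ofReal_iff (add_nonneg (hA_nn u) (hA_nn v))).mp hfin
    rw [hNv, hNv, hNv, hint_eq, hint_eq, hint_eq]
    rw [Real.mul_rpow hc0pos.le (hμnn (u + v)), Real.mul_rpow hc0pos.le (hμnn u),
      Real.mul_rpow hc0pos.le (hμnn v)]
    calc c0 ^ ((1:ℝ)/d) * (∫ t, F (u+v) t ^ d ∂μ) ^ ((1:ℝ)/d)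
        ≤ c0 ^ ((1:ℝ)/d) * ((∫ t, F u t ^ d ∂μ) ^ ((1:ℝ)/d)
            + (∫ t, F v t ^ d ∂μ) ^ ((1:ℝ)/d)) :=
          mul_le_mul_of_nonneg_left hABle (Real.rpow_nonneg hc0pos.le _)
      _ = c0 ^ ((1:ℝ)/d) * (∫ t, F u t ^ d ∂μ) ^ ((1:ℝ)/d)
            + c0 ^ ((1:ℝ)/d) * (∫ t, F v t ^ d ∂μ) ^ ((1:ℝ)/d) := by ring
  exact ⟨hNnn, part2, part3, part4, part5⟩
end
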